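/- arXiv:2601.15214 — 2 statements merged into one kernel-verified Lean document; each statement's English description precedes it below -/
import Mathlib

section
/- Let e₁ and e₂ be REwLA terms over the set A of term variables, let V be the finite set of term variables occurring in e₁ or e₂, and let end := (Σ_{a∈V} a)ᵃ. Then L(e₁) = L(e₂) if and only if the equation e₁;end = e₂;end is valid on the class of word structures, i.e., for every string w ∈ A*, ⟦e₁;end⟧^{S^w} = ⟦e₂;end⟧^{S^w}. -/
/-- Regular expressions with lookahead (REwLA). -/
inductive RE (A : Type) : Type where
  | var : A → RE A
  | one : RE A
  | zero : RE A
  | comp : RE A → RE A → RE A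
  | union : RE A → RE A → RE A
  | plus : RE A → RE A
  | adom : RE A → RE A

/-- Relational semantics of REwLA terms, given an interpretation `ρ` of term variables. -/
def reSem {A W : Type} (ρ : A → W → W → Prop) : RE A → W → W → Prop
  | .var a => ρ a
  | .one => fun x y => x = y
  | .zero => fun _ _ => False
  | .comp e f => fun x z => ∃ y, reSem ρ e x y ∧ reSem ρ f y z
  | .union e f => fun x y => reSem ρ e x y ∨ reSem ρ f x y
  | .plus e => fun x y => Relation.TransGen (fun u v => reSem ρ e u v) x y
  | .adom e => fun x y => x = y ∧ ∀ z, ¬ reSem ρ e x z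

/-- Interpretation of term variables in the word structure `S^w`. -/
def wordRel {A : Type} (w : List A) (a : A) (i j : Fin (w.length + 1)) : Prop :=
  (j : ℕ) = (i : ℕ) + 1 ∧ w[(i : ℕ)]? = some a

/-- Semantics of an REwLA term on the word structure `S^w`. -/
def wordSem {A : Type} (w : List A) (e : RE A) :
    Fin (w.length + 1) → Fin (w.length + 1) → Prop :=
  reSem (wordRel w) e

/-- The language of an REwLA term. -/
def reLang {A : Type} (e : RE A) : Set (List A) :=
  {w | wordSem w e 0 (Fin.last w.length)}

/-- The list of term variables occurring in a term. -/
def reVars {A : Type} : RE A → List A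
  | .var a => [a]
  | .one => []
  | .zero => []
  | .comp e f => reVars e ++ reVars f
  | .union e f => reVars e ++ reVars f
  | .plus e => reVars e
  | .adom e => reVars e

/-- The sum (finite union) `0 + a₁ + ⋯ + aₖ` of a list of term variables. -/
def sumVars {A : Type} (l : List A) : RE A :=
  l.foldr (fun a t => RE.union (RE.var a) t) RE.zero

/-!
On a word structure every term relates positions `i ≤ j` only. If no variable of `e` labels the
letter at position `j` (which is exactly what `end` tests), then `(i, j) ∈ ⟦e⟧` iff the factor
`w[i, j)` lies in `L(e)`: embedding `S^{w[i,j)}` into `S^w` at offset `i` is a bounded morphism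
for the variables of `e`, and bounded morphisms preserve all REwLA operations, antidomain
included (thanks to the back condition). Since the last position of a word always passes `end`,
the languages are recovered from `e;end` at `(0, |w|)`.
-/

open Function Relation

variable {A W W' : Type}

def IsBoundedMorphism (R : W → W → Prop) (R' : W' → W' → Prop) (f : W → W') : Prop :=
  (∀ x y, R x y → R' (f x) (f y)) ∧ ∀ x z, R' (f x) z → ∃ y, f y = z ∧ R x y

namespace IsBoundedMorphism

variable {R : W → W → Prop} {R' : W' → W' → Prop} {f : W → W'}

theorem transGen (hf : IsBoundedMorphism R R' f) :
    IsBoundedMorphism (TransGen R) (TransGen R') f := by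
  refine ⟨fun x y h => h.lift f hf.1, fun x z h => ?_⟩
  induction h with
  | single h =>
      obtain ⟨y, rfl, hy⟩ := hf.2 _ _ h
      exact ⟨y, rfl, .single hy⟩
  | tail _ h ih =>
      obtain ⟨y, rfl, hy⟩ := ih
      obtain ⟨y', rfl, hy'⟩ := hf.2 _ _ h
      exact ⟨y', rfl, hy.tail hy'⟩

theorem iff_of_injective (hf : IsBoundedMorphism R R' f) (hinj : Injective f) {x y : W} :
    R' (f x) (f y) ↔ R x y := by
  refine ⟨fun h => ?_, hf.1 x y⟩
  obtain ⟨y', hy', h'⟩ := hf.2 _ _ h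
  rwa [hinj hy'] at h'

end IsBoundedMorphism

theorem isBoundedMorphism_reSem {ρ : A → W → W → Prop} {ρ' : A → W' → W' → Prop}
    {f : W → W'} :
    ∀ {e : RE A}, (∀ a ∈ reVars e, IsBoundedMorphism (ρ a) (ρ' a) f) →
      IsBoundedMorphism (reSem ρ e) (reSem ρ' e) f
  | .var a, h => h a (List.mem_singleton_self a)
  | .one, _ => ⟨fun _ _ h => congrArg f h, fun x _ h => ⟨x, h, rfl⟩⟩
  | .zero, _ => ⟨fun _ _ h => h, fun _ _ h => h.elim⟩
  | .comp e g, h => by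
      obtain ⟨he, hg⟩ := List.forall_mem_append.1 h
      obtain ⟨he₁, he₂⟩ := isBoundedMorphism_reSem he
      obtain ⟨hg₁, hg₂⟩ := isBoundedMorphism_reSem hg
      refine ⟨fun x z ⟨y, hxy, hyz⟩ => ⟨f y, he₁ x y hxy, hg₁ y z hyz⟩, ?_⟩
      rintro x z ⟨_, hxy', hyz'⟩
      obtain ⟨y, rfl, hxy⟩ := he₂ x _ hxy'
      obtain ⟨z, rfl, hyz⟩ := hg₂ y _ hyz'
      exact ⟨z, rfl, y, hxy, hyz⟩
  | .union e g, h => by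
      obtain ⟨he, hg⟩ := List.forall_mem_append.1 h
      obtain ⟨he₁, he₂⟩ := isBoundedMorphism_reSem he
      obtain ⟨hg₁, hg₂⟩ := isBoundedMorphism_reSem hg
      refine ⟨fun x y hxy => hxy.imp (he₁ x y) (hg₁ x y), ?_⟩
      rintro x z (hxz | hxz)
      · obtain ⟨y, rfl, hxy⟩ := he₂ x z hxz
        exact ⟨y, rfl, .inl hxy⟩
      · obtain ⟨y, rfl, hxy⟩ := hg₂ x z hxz
        exact ⟨y, rfl, .inr hxy⟩
  | .plus e, h => (isBoundedMorphism_reSem (e := e) h).transGen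
  | .adom e, h => by
      obtain ⟨he₁, he₂⟩ := isBoundedMorphism_reSem (e := e) h
      refine ⟨fun x y ⟨hxy, hx⟩ => ⟨congrArg f hxy, fun z' hz' => ?_⟩, ?_⟩
      · obtain ⟨z, -, hz⟩ := he₂ x z' hz'
        exact hx z hz
      · rintro x z ⟨rfl, hx⟩
        exact ⟨x, rfl, rfl, fun y hy => hx (f y) (he₁ x y hy)⟩

theorem le_of_reSem [Preorder W] {ρ : A → W → W → Prop}
    (hρ : ∀ a x y, ρ a x y → x ≤ y) :
    ∀ {e : RE A} {x y : W}, reSem ρ e x y → x ≤ y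
  | .var a, _, _, h => hρ a _ _ h
  | .one, _, _, h => le_of_eq h
  | .comp _ _, _, _, ⟨_, hxy, hyz⟩ => (le_of_reSem hρ hxy).trans (le_of_reSem hρ hyz)
  | .union _ _, _, _, h => h.elim (le_of_reSem hρ) (le_of_reSem hρ)
  | .plus _, _, _, h => h.trans_induction_on (le_of_reSem hρ) (fun _ _ => le_trans)
  | .adom _, _, _, ⟨h, _⟩ => le_of_eq h

theorem reSem_sumVars {ρ : A → W → W → Prop} {l : List A} {x y : W} :
    reSem ρ (sumVars l) x y ↔ ∃ a ∈ l, ρ a x y := by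
  induction l with
  | nil => simp [sumVars, reSem]
  | cons a l ih =>
      simp only [sumVars, List.foldr_cons, reSem] at ih ⊢
      simp [ih]

section Words

variable {w : List A}

theorem le_of_wordSem {e : RE A} {i j : Fin (w.length + 1)} (h : wordSem w e i j) : i ≤ j :=
  le_of_reSem (fun _ _ _ (hxy : wordRel w _ _ _) => Fin.le_iff_val_le_val.2 (hxy.1 ▸ by omega)) h

theorem wordSem_adom_sumVars_iff {V : List A} {x y : Fin (w.length + 1)} :
    wordSem w (.adom (sumVars V)) x y ↔ x = y ∧ ∀ a ∈ V, w[(x : ℕ)]? ≠ some a := by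
  simp only [wordSem, reSem, reSem_sumVars, wordRel, not_exists, not_and]
  refine and_congr_right fun _ => ⟨fun h a ha hx => ?_, fun h z a ha _ hx => h a ha hx⟩
  have : (x : ℕ) < w.length := (List.getElem?_eq_some_iff.1 hx).1
  exact h ⟨x + 1, by omega⟩ a ha rfl hx

def extractPos (w : List A) (i j : Fin (w.length + 1)) (x : Fin ((w.extract i j).length + 1)) :
    Fin (w.length + 1) :=
  ⟨i + x, by have := x.isLt; have := i.isLt; simp at *; omega⟩

theorem extractPos_injective (i j : Fin (w.length + 1)) : Injective (extractPos w i j) :=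
  fun x y h => Fin.ext (by simpa [extractPos] using h)

theorem length_extract {i j : Fin (w.length + 1)} (hij : i ≤ j) :
    (w.extract i j).length = j - i := by
  have := j.isLt
  simp only [List.extract_eq_take_drop, List.length_take, List.length_drop]
  omega

theorem isBoundedMorphism_extractPos {i j : Fin (w.length + 1)} {a : A} (hij : i ≤ j)
    (hj : w[(j : ℕ)]? ≠ some a) :
    IsBoundedMorphism (wordRel (w.extract i j) a) (wordRel w a) (extractPos w i j) := by
  have hlen := length_extract hij
  have hget : ∀ x : ℕ, x < j - i → (w.extract i j)[x]? = w[(i : ℕ) + x]? := fun x hx => by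
    simp [hx]
  refine ⟨fun x y ⟨hy, hx⟩ => ?_, fun x z ⟨hz, hx⟩ => ?_⟩
  · have hlt : (x : ℕ) < j - i := hlen ▸ (List.getElem?_eq_some_iff.1 hx).1
    exact ⟨by simp [extractPos, hy]; omega, hget x hlt ▸ hx⟩
  · have hx' := x.isLt
    by_cases hlt : (x : ℕ) < j - i
    · refine ⟨⟨x + 1, by omega⟩, Fin.ext ?_, rfl, (hget x hlt).trans hx⟩
      simp only [extractPos, hz]
      omega
    · have : (i : ℕ) + x = j := by omega
      exact (hj (this ▸ hx)).elim

theorem wordSem_iff_mem_reLang_extract {e : RE A} {i j : Fin (w.length + 1)} (hij : i ≤ j)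
    (hj : ∀ a ∈ reVars e, w[(j : ℕ)]? ≠ some a) :
    wordSem w e i j ↔ w.extract i j ∈ reLang e := by
  have hf := isBoundedMorphism_reSem fun a ha => isBoundedMorphism_extractPos hij (hj a ha)
  have h₀ : extractPos w i j 0 = i := Fin.ext (by simp [extractPos])
  have hlast : extractPos w i j (Fin.last _) = j :=
    Fin.ext (by simp only [extractPos, Fin.val_last, length_extract hij]; omega)
  have := hf.iff_of_injective (extractPos_injective i j) (x := 0) (y := Fin.last _)
  rwa [h₀, hlast] at this

theorem wordSem_comp_adom_sumVars_iff {e : RE A} {V : List A} (hV : ∀ a ∈ reVars e, a ∈ V)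
    {i j : Fin (w.length + 1)} :
    wordSem w (.comp e (.adom (sumVars V))) i j ↔
      (i ≤ j ∧ ∀ a ∈ V, w[(j : ℕ)]? ≠ some a) ∧ w.extract i j ∈ reLang e := by
  change (∃ m, wordSem w e i m ∧ wordSem w (.adom (sumVars V)) m j) ↔ _
  simp only [wordSem_adom_sumVars_iff]
  constructor
  · rintro ⟨m, he, rfl, hm⟩
    have hij := le_of_wordSem he
    exact ⟨⟨hij, hm⟩, (wordSem_iff_mem_reLang_extract hij fun a ha => hm a (hV a ha)).1 he⟩
  · rintro ⟨⟨hij, hj⟩, he⟩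
    exact ⟨j, (wordSem_iff_mem_reLang_extract hij fun a ha => hj a (hV a ha)).2 he, rfl, hj⟩

end Words

theorem language_equiv_iff_valid_on_word_structures
    {A : Type} [DecidableEq A] (e₁ e₂ : RE A)
    (endT : RE A)
    (hend : endT = RE.adom (sumVars ((reVars e₁ ++ reVars e₂).dedup))) :
    reLang e₁ = reLang e₂ ↔
      ∀ (w : List A) (i j : Fin (w.length + 1)),
        wordSem w (RE.comp e₁ endT) i j ↔ wordSem w (RE.comp e₂ endT) i j := by
  subst hend
  have h₁ : ∀ a ∈ reVars e₁, a ∈ (reVars e₁ ++ reVars e₂).dedup :=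
    fun a ha => List.mem_dedup.2 (List.mem_append_left _ ha)
  have h₂ : ∀ a ∈ reVars e₂, a ∈ (reVars e₁ ++ reVars e₂).dedup :=
    fun a ha => List.mem_dedup.2 (List.mem_append_right _ ha)
  simp only [wordSem_comp_adom_sumVars_iff h₁, wordSem_comp_adom_sumVars_iff h₂]
  refine ⟨fun h w i j => by rw [h], fun h => Set.ext fun w => ?_⟩
  simpa using h w 0 (Fin.last _)
end

section
/- Let e₁ and e₂ be REwLA terms over the set A of term variables. Then SML(e₁) = SML(e₂) if and only if the equation e₁ = e₂ is valid on GRELfinlin, i.e., ⟦e₁⟧ˢ = ⟦e₂⟧ˢ for every generalized structure S whose universal relation is a finite linear order. -/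
/-!
Evaluating `eθ` on the word structure of `w` is the same as evaluating `e` on the structure
over the positions of `w` that interprets each variable `a` as `⟦θ a⟧`; its relations lie in
the order of positions, so it is a finite linear structure. This gives validity ⇒ equal `SML`.

Conversely, a finite linear structure is isomorphic to one on `Fin (n + 1)` with the usual
order. On the word `cⁿ` every position, and hence every pair `i ≤ j` of positions, is definable
by a term (using antidomain to test how many more `c`-steps are possible), so any relations
contained in `≤` are of the form `⟦θ a⟧`, and every finite linear structure arises as above.
When `A` is empty there is no letter `c`, but then every term is closed and denotes either the
identity or the empty relation, uniformly in the structure.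
-/

/-- A generalized structure over term variables `A` and formula variables `P`,
with universe `W`. -/
structure GStruct (A P W : Type) where
  U : W → W → Prop
  rel : A → W → W → Prop
  rel_sub : ∀ a x y, rel a x y → U x y
  val : P → W → Prop

/-- The universal relation is a finite linear order (on a nonempty finite universe). -/
def FinLin {A P W : Type} (S : GStruct A P W) : Prop :=
  Nonempty W ∧ Finite W ∧ (∀ x, S.U x x) ∧
    (∀ x y z, S.U x y → S.U y z → S.U x z) ∧
    (∀ x y, S.U x y → S.U y x → x = y) ∧ (∀ x y, S.U x y ∨ S.U y x)

/-- Applying a substitution (of terms for term variables) to a term. -/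
def reSubst {A : Type} (θ : A → RE A) : RE A → RE A
  | .var a => θ a
  | .one => .one
  | .zero => .zero
  | .comp e f => .comp (reSubst θ e) (reSubst θ f)
  | .union e f => .union (reSubst θ e) (reSubst θ f)
  | .plus e => .plus (reSubst θ e)
  | .adom e => .adom (reSubst θ e)

/-- The match-language `ML(e) = {(w,i,j) : (i,j) ∈ ⟦e⟧^{S^w}}`. -/
def ML {A : Type} (e : RE A) : Set (List A × ℕ × ℕ) :=
  {x | ∃ (hi : x.2.1 < x.1.length + 1) (hj : x.2.2 < x.1.length + 1),
    wordSem x.1 e ⟨x.2.1, hi⟩ ⟨x.2.2, hj⟩}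

/-- The match-language with substitutions `SML(e) = ⋃_θ {θ} × ML(eθ)`. -/
def SML {A : Type} (e : RE A) : Set ((A → RE A) × (List A × ℕ × ℕ)) :=
  {q | q.2 ∈ ML (reSubst q.1 e)}

namespace RE

variable {A : Type}

def npow (e : RE A) : ℕ → RE A
  | 0 => .one
  | k + 1 => .comp (npow e k) e

def sum : List (RE A) → RE A
  | [] => .zero
  | e :: l => .union e (sum l)

def EvalsToOne [IsEmpty A] : RE A → Prop
  | .var a => isEmptyElim a
  | .one => True
  | .zero => False
  | .comp e f => EvalsToOne e ∧ EvalsToOne f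
  | .union e f => EvalsToOne e ∨ EvalsToOne f
  | .plus e => EvalsToOne e
  | .adom e => ¬ EvalsToOne e

/-- On a word of the form `cⁿ`, holds exactly at position `i`: from position `x` one can
take `n - i` steps iff `x ≤ i`, and cannot take `n + 1 - i` steps iff `i ≤ x`. -/
def atPos (c : A) (n i : ℕ) : RE A :=
  .comp (.adom (.adom ((var c).npow (n - i)))) (.adom ((var c).npow (n + 1 - i)))

def pairTerm (c : A) (n i j : ℕ) : RE A :=
  .comp (atPos c n i) ((var c).npow (j - i))

end RE

open RE

section Semantics

variable {A W : Type}

theorem reSubst_var (e : RE A) : reSubst RE.var e = e := by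
  induction e with
  | var a => rfl
  | one | zero => rfl
  | comp e f ihe ihf | union e f ihe ihf => simp only [reSubst, ihe, ihf]
  | plus e ih | adom e ih => simp only [reSubst, ih]

theorem reSem_reSubst (ρ : A → W → W → Prop) (θ : A → RE A) (e : RE A) :
    reSem ρ (reSubst θ e) = reSem (fun a => reSem ρ (θ a)) e := by
  induction e with
  | var a => rfl
  | one | zero => rfl
  | comp e f ihe ihf | union e f ihe ihf => simp only [reSem, reSubst, ihe, ihf]
  | plus e ih | adom e ih => simp only [reSem, reSubst, ih]

theorem reSem_comp (ρ : A → W → W → Prop) (e f : RE A) (x z : W) :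
    reSem ρ (.comp e f) x z ↔ ∃ y, reSem ρ e x y ∧ reSem ρ f y z :=
  Iff.rfl

theorem reSem_adom (ρ : A → W → W → Prop) (e : RE A) (x y : W) :
    reSem ρ (.adom e) x y ↔ x = y ∧ ¬ ∃ z, reSem ρ e x z := by
  simp only [reSem, not_exists]

theorem reSem_adom_adom (ρ : A → W → W → Prop) (e : RE A) (x y : W) :
    reSem ρ (.adom (.adom e)) x y ↔ x = y ∧ ∃ z, reSem ρ e x z := by
  rw [reSem_adom]
  constructor
  · rintro ⟨hxy, h⟩
    exact ⟨hxy, not_not.1 fun hne => h ⟨x, (reSem_adom ρ e x x).2 ⟨rfl, hne⟩⟩⟩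
  · rintro ⟨hxy, he⟩
    exact ⟨hxy, fun ⟨_, hz⟩ => ((reSem_adom ρ e x _).1 hz).2 he⟩

theorem reSem_sum (ρ : A → W → W → Prop) (l : List (RE A)) (x y : W) :
    reSem ρ (RE.sum l) x y ↔ ∃ e ∈ l, reSem ρ e x y := by
  induction l with
  | nil => simp [RE.sum, reSem]
  | cons e l ih => simp [RE.sum, reSem, ih]

theorem reSem_le [Preorder W] {ρ : A → W → W → Prop} (hρ : ∀ a x y, ρ a x y → x ≤ y)
    (e : RE A) {x y : W} (h : reSem ρ e x y) : x ≤ y := by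
  induction e generalizing x y with
  | var a => exact hρ a x y h
  | one => exact h.le
  | zero => exact h.elim
  | comp e f ihe ihf =>
    obtain ⟨z, hxz, hzy⟩ := h
    exact (ihe hxz).trans (ihf hzy)
  | union e f ihe ihf => exact h.elim ihe ihf
  | plus e ih =>
    induction h with
    | single h => exact ih h
    | tail _ h hle => exact hle.trans (ih h)
  | adom e ih => exact h.1.le

theorem reSem_comap_equiv {V : Type} (φ : V ≃ W) (ρ : A → W → W → Prop) (e : RE A)
    (u v : V) : reSem (fun a p q => ρ a (φ p) (φ q)) e u v ↔ reSem ρ e (φ u) (φ v) := by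
  induction e generalizing u v with
  | var a => rfl
  | one => exact φ.injective.eq_iff.symm
  | zero => rfl
  | comp e f ihe ihf => simp only [reSem, ihe, ihf, φ.surjective.exists]
  | union e f ihe ihf => simp only [reSem, ihe, ihf]
  | plus e ih =>
    simp only [reSem]
    constructor
    · exact fun h => h.lift φ fun p q => (ih p q).1
    · intro h
      have := h.lift φ.symm fun x y hxy => (ih _ _).2 (by simpa only [φ.apply_symm_apply])
      simpa only [Function.onFun, φ.symm_apply_apply] using this
  | adom e ih => simp only [reSem, ih, φ.injective.eq_iff, φ.surjective.forall]

theorem reSem_of_isEmpty [IsEmpty A] (ρ : A → W → W → Prop) (e : RE A) (x y : W) :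
    reSem ρ e x y ↔ x = y ∧ e.EvalsToOne := by
  induction e generalizing x y with
  | var a => exact isEmptyElim a
  | one => simp [reSem, EvalsToOne]
  | zero => simp [reSem, EvalsToOne]
  | comp e f ihe ihf =>
    simp only [reSem, EvalsToOne, ihe, ihf]
    constructor
    · rintro ⟨z, ⟨rfl, he⟩, rfl, hf⟩
      exact ⟨rfl, he, hf⟩
    · rintro ⟨rfl, he, hf⟩
      exact ⟨x, ⟨rfl, he⟩, rfl, hf⟩
  | union e f ihe ihf => simp only [reSem, EvalsToOne, ihe, ihf, and_or_left]
  | plus e ih =>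
    simp only [reSem, EvalsToOne]
    constructor
    · intro h
      induction h with
      | single h => exact (ih _ _).1 h
      | tail _ h hxz => exact ((ih _ _).1 h).1 ▸ hxz
    · rintro ⟨rfl, he⟩
      exact .single ((ih x x).2 ⟨rfl, he⟩)
  | adom e ih =>
    simp only [reSem_adom, EvalsToOne, ih]
    constructor
    · rintro ⟨rfl, h⟩
      exact ⟨rfl, fun he => h ⟨x, rfl, he⟩⟩
    · rintro ⟨rfl, h⟩
      exact ⟨rfl, fun ⟨_, _, he⟩ => h he⟩

end Semantics

section Word

variable {A : Type} {w : List A} {c : A}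

theorem le_of_wordRel {a : A} {i j : Fin (w.length + 1)} (h : wordRel w a i j) : i ≤ j := by
  rw [Fin.le_def, h.1]
  exact Nat.le_succ _

theorem wordRel_iff_of_forall_eq (hw : ∀ a ∈ w, a = c) {i j : Fin (w.length + 1)} :
    wordRel w c i j ↔ (j : ℕ) = i + 1 := by
  refine ⟨And.left, fun hj => ⟨hj, ?_⟩⟩
  have hi : (i : ℕ) < w.length := by omega
  rw [List.getElem?_eq_getElem hi, hw _ (List.getElem_mem hi)]

theorem reSem_npow_var (hw : ∀ a ∈ w, a = c) (k : ℕ) (i j : Fin (w.length + 1)) :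
    reSem (wordRel w) ((var c).npow k) i j ↔ (j : ℕ) = i + k := by
  induction k generalizing j with
  | zero => simp [npow, reSem, Fin.ext_iff, eq_comm]
  | succ k ih =>
    simp only [npow, reSem, ih, wordRel_iff_of_forall_eq hw]
    constructor
    · rintro ⟨z, hz, hj⟩
      omega
    · intro hj
      exact ⟨⟨i + k, by omega⟩, rfl, by simp only; omega⟩

theorem exists_reSem_npow_var (hw : ∀ a ∈ w, a = c) (k : ℕ) (i : Fin (w.length + 1)) :
    (∃ j, reSem (wordRel w) ((var c).npow k) i j) ↔ (i : ℕ) + k ≤ w.length := by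
  simp only [reSem_npow_var hw]
  exact ⟨fun ⟨j, hj⟩ => by omega, fun h => ⟨⟨i + k, by omega⟩, rfl⟩⟩

theorem reSem_atPos (hw : ∀ a ∈ w, a = c) (i x y : Fin (w.length + 1)) :
    reSem (wordRel w) (atPos c w.length i) x y ↔ x = y ∧ x = i := by
  simp only [atPos, reSem_comp, reSem_adom_adom]
  simp only [reSem_adom, exists_reSem_npow_var hw]
  constructor
  · rintro ⟨z, ⟨rfl, hle⟩, rfl, hge⟩
    exact ⟨rfl, Fin.ext (by omega)⟩
  · rintro ⟨rfl, rfl⟩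
    exact ⟨x, ⟨rfl, by omega⟩, rfl, by omega⟩

theorem reSem_pairTerm (hw : ∀ a ∈ w, a = c) {i j : Fin (w.length + 1)} (hij : i ≤ j)
    (x y : Fin (w.length + 1)) :
    reSem (wordRel w) (pairTerm c w.length i j) x y ↔ x = i ∧ y = j := by
  have hij' := Fin.le_def.1 hij
  simp only [pairTerm, reSem_comp, reSem_atPos hw, reSem_npow_var hw]
  constructor
  · rintro ⟨z, ⟨rfl, rfl⟩, hy⟩
    exact ⟨rfl, Fin.ext (by omega)⟩
  · rintro ⟨rfl, rfl⟩
    exact ⟨x, ⟨rfl, rfl⟩, by omega⟩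

theorem exists_wordSem_eq (hw : ∀ a ∈ w, a = c)
    (R : Fin (w.length + 1) → Fin (w.length + 1) → Prop) (hR : ∀ i j, R i j → i ≤ j) :
    ∃ t : RE A, wordSem w t = R := by
  classical
  refine ⟨RE.sum ((Finset.univ.filter fun p : Fin (w.length + 1) × Fin (w.length + 1) =>
    R p.1 p.2).toList.map fun p => pairTerm c w.length p.1 p.2), ?_⟩
  funext x y
  simp only [wordSem, reSem_sum, List.mem_map, Finset.mem_toList, Finset.mem_filter,
    Finset.mem_univ, true_and, eq_iff_iff]
  constructor
  · rintro ⟨_, ⟨⟨i, j⟩, hij, rfl⟩, h⟩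
    obtain ⟨rfl, rfl⟩ := (reSem_pairTerm hw (hR i j hij) x y).1 h
    exact hij
  · intro hxy
    exact ⟨_, ⟨(x, y), hxy, rfl⟩, (reSem_pairTerm hw (hR x y hxy) x y).2 ⟨rfl, rfl⟩⟩

end Word

section FiniteLinearOrders

variable {A P W : Type} {S : GStruct A P W}

theorem FinLin.exists_equiv_fin (hS : FinLin S) {n : ℕ} (hn : Nat.card W = n + 1) :
    ∃ φ : Fin (n + 1) ≃ W, ∀ p q, S.U (φ p) (φ q) ↔ p ≤ q := by
  obtain ⟨-, hfin, hrefl, htrans, hanti, htot⟩ := hS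
  let _ : LinearOrder W :=
    { le := S.U
      le_refl := hrefl
      le_trans := htrans
      le_antisymm := hanti
      le_total := htot
      toDecidableLE := Classical.decRel _ }
  let _ : Fintype W := Fintype.ofFinite W
  let φ := monoEquivOfFin W (Nat.card_eq_fintype_card.symm.trans hn)
  exact ⟨φ.toEquiv, fun p q => φ.le_iff_le⟩

theorem FinLin.exists_wordSem_reSubst_iff (hS : FinLin S) (c : A) :
    ∃ (w : List A) (φ : Fin (w.length + 1) ≃ W) (θ : A → RE A),
      ∀ e u v, wordSem w (reSubst θ e) u v ↔ reSem S.rel e (φ u) (φ v) := by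
  have hW : 0 < Nat.card W :=
    have := hS.1
    have := hS.2.1
    Nat.card_pos
  let w := List.replicate (Nat.card W - 1) c
  have hw : ∀ a ∈ w, a = c := fun _ => List.eq_of_mem_replicate
  obtain ⟨φ, hφ⟩ := hS.exists_equiv_fin (n := w.length) <| by
    simp only [w, List.length_replicate]
    omega
  choose θ hθ using fun a => exists_wordSem_eq hw (fun p q => S.rel a (φ p) (φ q))
    fun p q h => (hφ p q).1 (S.rel_sub a _ _ h)
  refine ⟨w, φ, θ, fun e u v => ?_⟩
  rw [wordSem, reSem_reSubst, show (fun a => reSem (wordRel w) (θ a)) = _ from funext hθ]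
  exact reSem_comap_equiv φ S.rel e u v

end FiniteLinearOrders

section MatchLanguages

variable {A : Type} {e₁ e₂ : RE A}

theorem SML_eq_SML_iff :
    SML e₁ = SML e₂ ↔
      ∀ θ w, wordSem w (reSubst θ e₁) = wordSem w (reSubst θ e₂) := by
  constructor
  · intro h θ w
    funext i j
    have hmem := Set.ext_iff.1 h (θ, w, i, j)
    exact propext ⟨fun h₁ => (hmem.1 ⟨i.isLt, j.isLt, h₁⟩).2.2,
      fun h₂ => (hmem.2 ⟨i.isLt, j.isLt, h₂⟩).2.2⟩
  · intro h
    ext ⟨θ, w, i, j⟩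
    simp only [SML, ML, Set.mem_ofPred_eq, h]

theorem wordSem_reSubst_eq_of_valid {P : Type}
    (h : ∀ (W : Type) (S : GStruct A P W), FinLin S →
      ∀ x y, reSem S.rel e₁ x y ↔ reSem S.rel e₂ x y)
    (θ : A → RE A) (w : List A) : wordSem w (reSubst θ e₁) = wordSem w (reSubst θ e₂) := by
  let S : GStruct A P (Fin (w.length + 1)) :=
    { U := (· ≤ ·)
      rel := fun a => wordSem w (θ a)
      rel_sub := fun a _ _ => reSem_le (fun _ _ _ => le_of_wordRel) (θ a)
      val := fun _ _ => False }
  have hS : FinLin S :=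
    ⟨⟨0⟩, inferInstance, le_refl, fun _ _ _ => le_trans, fun _ _ => le_antisymm, le_total⟩
  funext u v
  simp only [wordSem, reSem_reSubst]
  exact propext (h _ S hS u v)

theorem reSem_eq_of_wordSem_reSubst_eq
    (h : ∀ θ w, wordSem w (reSubst θ e₁) = wordSem w (reSubst θ e₂))
    {P W : Type} {S : GStruct A P W} (hS : FinLin S) : reSem S.rel e₁ = reSem S.rel e₂ := by
  cases isEmpty_or_nonempty A with
  | inl hA =>
    have h₀ := congrFun₂ (h RE.var []) 0 0
    simp only [reSubst_var, wordSem, reSem_of_isEmpty, true_and] at h₀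
    funext x y
    simp only [reSem_of_isEmpty, h₀]
  | inr hA =>
    obtain ⟨w, φ, θ, hθ⟩ := hS.exists_wordSem_reSubst_iff hA.some
    funext x y
    obtain ⟨u, rfl⟩ := φ.surjective x
    obtain ⟨v, rfl⟩ := φ.surjective y
    rw [← propext (hθ e₁ u v), ← propext (hθ e₂ u v), h]

end MatchLanguages

theorem SML_equiv_iff_valid_on_finlin {A P : Type} (e₁ e₂ : RE A) :
    SML e₁ = SML e₂ ↔
      ∀ (W : Type) (S : GStruct A P W), FinLin S →
        ∀ x y : W, reSem S.rel e₁ x y ↔ reSem S.rel e₂ x y := by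
  rw [SML_eq_SML_iff]
  exact ⟨fun h W S hS x y => by rw [reSem_eq_of_wordSem_reSubst_eq h hS],
    wordSem_reSubst_eq_of_valid⟩
end
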